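/- arXiv:1605.02655 — 8 statements merged into one kernel-verified Lean document; each statement's English description precedes it below -/
import Mathlib

section
/- Let H be a d-uniform r-partite hypergraph with 2 ≤ d ≤ r that satisfies condition (**) for r, with parts V_i = {x_{1i}, …, x_{ni}} for 1 ≤ i ≤ r. If H is unmixed, then every minimal vertex cover of H contains exactly r − d + 1 elements of each clique {x_{j1}, x_{j2}, …, x_{jr}}, for every 1 ≤ j ≤ n. -/
/-- `C` is a vertex cover of the hypergraph `H`: it meets every hyperedge. -/
def IsVertexCover {V : Type*} [DecidableEq V] (H : Finset (Finset V)) (C : Finset V) : Prop :=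
  ∀ e ∈ H, (e ∩ C).Nonempty

/-- `C` is a minimal vertex cover of `H`. -/
def IsMinimalVertexCover {V : Type*} [DecidableEq V] (H : Finset (Finset V)) (C : Finset V) :
    Prop :=
  IsVertexCover H C ∧ ∀ C' ⊂ C, ¬ IsVertexCover H C'

/-- `H` is unmixed: all minimal vertex covers have the same cardinality. -/
def IsUnmixed {V : Type*} [DecidableEq V] (H : Finset (Finset V)) : Prop :=
  ∀ C₁ C₂ : Finset V, IsMinimalVertexCover H C₁ → IsMinimalVertexCover H C₂ →
    C₁.card = C₂.card

/-!
A vertex cover meets each row, a clique on `r` vertices, in at least `r - d + 1` vertices: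
otherwise `d` uncovered vertices of the row would form an uncovered edge. Conversely, any
`r - d + 1` of the parts together form a cover, since an edge has `d` vertices in distinct parts.
A minimal cover inside it has at most `n (r - d + 1)` vertices, so by unmixedness so has every
minimal cover, and the row-wise lower bounds are forced to be equalities.
-/

open Finset

section VertexCover

variable {V : Type*} [DecidableEq V] {H : Finset (Finset V)} {C : Finset V}

theorem IsVertexCover.exists_isMinimalVertexCover_subset (hC : IsVertexCover H C) :
    ∃ C' ⊆ C, IsMinimalVertexCover H C' := by
  classical
  obtain ⟨C', hC'⟩ := exists_minimal (s := {D ∈ C.powerset | IsVertexCover H D})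
    ⟨C, mem_filter.2 ⟨mem_powerset_self C, hC⟩⟩
  obtain ⟨hC'C, hC'cover⟩ := mem_filter.1 hC'.prop
  refine ⟨C', mem_powerset.1 hC'C, hC'cover, fun D hD hDcover => hC'.not_lt ?_ hD⟩
  exact mem_filter.2 ⟨mem_powerset.2 (hD.subset.trans (mem_powerset.1 hC'C)), hDcover⟩

theorem IsVertexCover.card_lt_card_inter_add (hC : IsVertexCover H C) {s : Finset V} {d : ℕ}
    (hs : ∀ t ⊆ s, #t = d → t ∈ H) : #s < #(C ∩ s) + d := by
  by_contra! hle
  have hsdiff : d ≤ #(s \ C) := by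
    have := card_sdiff_add_card_inter s C
    rw [inter_comm] at hle
    omega
  obtain ⟨t, hts, htd⟩ := exists_subset_card_eq hsdiff
  obtain ⟨v, hv⟩ := hC t (hs t (hts.trans sdiff_subset) htd)
  exact (mem_sdiff.1 (hts (mem_inter.1 hv).1)).2 (mem_inter.1 hv).2

theorem isVertexCover_filter_mem_of_injOn [Fintype V] {ι : Type*} [DecidableEq ι] [Fintype ι]
    {d : ℕ} (f : V → ι) (hcard : ∀ e ∈ H, d ≤ #e) (hinj : ∀ e ∈ H, Set.InjOn f e)
    {T : Finset ι} (hT : Fintype.card ι < #T + d) : IsVertexCover H {v | f v ∈ T} := by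
  intro e he
  by_contra hdisj
  have hmaps : Set.MapsTo f e ↑Tᶜ := fun v hv => by
    rw [coe_compl, Set.mem_compl_iff, mem_coe]
    exact fun hvT => hdisj ⟨v, mem_inter.2 ⟨hv, mem_filter.2 ⟨mem_univ v, hvT⟩⟩⟩
  have hle := card_le_card_of_injOn f hmaps (hinj e he)
  rw [card_compl] at hle
  have hde := hcard e he
  have hTι := T.card_le_univ
  omega

end VertexCover

theorem inter_image_univ_mk {α β : Type*} [DecidableEq α] [DecidableEq β] [Fintype β]
    (C : Finset (α × β)) (j : α) :
    C ∩ univ.image (fun i => (j, i)) = {p ∈ C | p.1 = j} := by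
  ext ⟨a, b⟩
  simp [and_comm, eq_comm]

theorem card_filter_fst_eq_of_card_le {α β : Type*} [DecidableEq α] [Fintype α]
    {C : Finset (α × β)} {m : ℕ}
    (hrow : ∀ j, m ≤ #{p ∈ C | p.1 = j}) (hC : #C ≤ Fintype.card α * m) (j : α) :
    #{p ∈ C | p.1 = j} = m := by
  have hsum : ∑ j, #{p ∈ C | p.1 = j} = #C :=
    (card_eq_sum_card_fiberwise fun p _ => mem_univ p.1).symm
  have hconst : ∑ _j : α, m = Fintype.card α * m := by simp
  refine (sum_eq_sum_iff_of_le fun j _ => hrow j).1 ?_ j (mem_univ j) |>.symm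
  have hle := sum_le_sum fun j (_ : j ∈ univ) => hrow j
  omega

theorem unmixed_minimalVertexCover_inter_row_card_general {n r d : ℕ} (hd : 2 ≤ d) (hdr : d ≤ r)
    (H : Finset (Finset (Fin n × Fin r)))
    -- `H` is `d`-uniform
    (huniform : ∀ e ∈ H, e.card = d)
    -- `H` is `r`-partite with parts `V_i = {(j, i) : j}`: no hyperedge contains two
    -- distinct vertices from the same part
    (hpartite : ∀ e ∈ H, ∀ p ∈ e, ∀ p' ∈ e, p.2 = p'.2 → p = p')
    -- condition (**): each row `{(j, 1), …, (j, r)}` is a clique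
    (hclique : ∀ j : Fin n, ∀ s ⊆ Finset.univ.image (fun i : Fin r => (j, i)),
      s.card = d → s ∈ H)
    (hunmixed : IsUnmixed H) :
    ∀ C : Finset (Fin n × Fin r), IsMinimalVertexCover H C →
      ∀ j : Fin n, (C ∩ Finset.univ.image (fun i : Fin r => (j, i))).card = r - d + 1 := by
  intro C hC j
  obtain ⟨T, -, hT⟩ := exists_subset_card_eq (s := (univ : Finset (Fin r))) (n := r - d + 1)
    (by rw [card_univ, Fintype.card_fin]; omega)
  have hcover : IsVertexCover H (univ ×ˢ T) := by
    convert isVertexCover_filter_mem_of_injOn Prod.snd (fun e he => (huniform e he).ge) hpartite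
      (T := T) (by rw [Fintype.card_fin, hT]; omega)
    ext; simp
  obtain ⟨C₁, hC₁T, hC₁⟩ := hcover.exists_isMinimalVertexCover_subset
  have hrow (j : Fin n) : r - d + 1 ≤ #{p ∈ C | p.1 = j} := by
    have := hC.1.card_lt_card_inter_add (hclique j)
    rw [card_image_of_injective _ (Prod.mk_right_injective j), card_univ, Fintype.card_fin,
      inter_image_univ_mk] at this
    omega
  rw [inter_image_univ_mk]
  refine card_filter_fst_eq_of_card_le hrow ?_ j
  calc #C = #C₁ := hunmixed C C₁ hC hC₁
    _ ≤ #(univ ×ˢ T) := card_le_card hC₁T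
    _ = Fintype.card (Fin n) * (r - d + 1) := by rw [card_product, hT, card_univ]

/-- for a `d`-uniform `r`-partite hypergraph (`2 ≤ d ≤ r`) satisfying
condition (**) for `r` (vertices `x_{ji} = (j, i)`, parts `V_i`, each row a clique),
if `H` is unmixed then every minimal vertex cover contains exactly `r - d + 1`
elements of each clique `{x_{j1}, …, x_{jr}}`. -/
theorem unmixed_minimalVertexCover_inter_row_card {n r d : ℕ} (hd : 2 ≤ d) (hdr : d ≤ r)
    (H : Finset (Finset (Fin n × Fin r)))
    -- every vertex lies in some hyperedge (the union of the hyperedges is the vertex set)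
    (hunion : ∀ v : Fin n × Fin r, ∃ e ∈ H, v ∈ e)
    -- `H` is `d`-uniform
    (huniform : ∀ e ∈ H, e.card = d)
    -- `H` is `r`-partite with parts `V_i = {(j, i) : j}`: no hyperedge contains two
    -- distinct vertices from the same part
    (hpartite : ∀ e ∈ H, ∀ p ∈ e, ∀ p' ∈ e, p.2 = p'.2 → p = p')
    -- condition (**): each row `{(j, 1), …, (j, r)}` is a clique
    (hclique : ∀ j : Fin n, ∀ s ⊆ Finset.univ.image (fun i : Fin r => (j, i)),
      s.card = d → s ∈ H)
    (hunmixed : IsUnmixed H) :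
    ∀ C : Finset (Fin n × Fin r), IsMinimalVertexCover H C →
      ∀ j : Fin n, (C ∩ Finset.univ.image (fun i : Fin r => (j, i))).card = r - d + 1 :=
  unmixed_minimalVertexCover_inter_row_card_general hd hdr H huniform hpartite hclique hunmixed
end

section
/- Let H be a d-uniform r-partite hypergraph with 2 ≤ d ≤ r that satisfies condition (**) for r, with parts V_i = {x_{1i}, …, x_{ni}} for 1 ≤ i ≤ r. Then every vertex cover of H contains at least r − d + 1 elements of each clique {x_{j1}, x_{j2}, …, x_{jr}} (1 ≤ j ≤ n), and consequently every vertex cover of H has at least n(r − d + 1) elements. -/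
open Finset

namespace IsVertexCover

variable {V : Type*} [DecidableEq V] {H : Finset (Finset V)} {C s : Finset V} {d : ℕ}

/-- Any `d` vertices of `s` outside the cover would form an uncovered hyperedge. -/
theorem card_sdiff_lt (hC : IsVertexCover H C) (hs : ∀ t ⊆ s, t.card = d → t ∈ H) :
    (s \ C).card < d := by
  by_contra! hle
  obtain ⟨t, hts, htd⟩ := exists_subset_card_eq hle
  obtain ⟨v, hv⟩ := hC t (hs t (hts.trans sdiff_subset) htd)
  obtain ⟨hvt, hvC⟩ := mem_inter.mp hv
  exact (mem_sdiff.mp (hts hvt)).2 hvC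

theorem card_lt_card_inter_add_s1 (hC : IsVertexCover H C) (hs : ∀ t ⊆ s, t.card = d → t ∈ H) :
    s.card < (s ∩ C).card + d := by
  have := hC.card_sdiff_lt hs
  rw [← card_inter_add_card_sdiff s C]
  omega

end IsVertexCover

section Rows

variable {α β : Type*} [DecidableEq α] [DecidableEq β] [Fintype β]

theorem card_univ_image_prodMk (a : α) :
    (univ.image (Prod.mk a : β → α × β)).card = Fintype.card β :=
  card_image_of_injective _ (Prod.mk_right_injective a)

theorem inter_univ_image_prodMk (C : Finset (α × β)) (a : α) :
    C ∩ univ.image (Prod.mk a) = C.filter (·.1 = a) := by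
  ext ⟨x, y⟩
  simp [and_comm, eq_comm]

end Rows

theorem vertexCover_card_lower_bound_general {n r d : ℕ} (hdr : d ≤ r)
    (H : Finset (Finset (Fin n × Fin r)))
    -- condition (**): each row `{(j, 1), …, (j, r)}` is a clique
    (hclique : ∀ j : Fin n, ∀ s ⊆ Finset.univ.image (fun i : Fin r => (j, i)),
      s.card = d → s ∈ H) :
    ∀ C : Finset (Fin n × Fin r), IsVertexCover H C →
      (∀ j : Fin n, r - d + 1 ≤ (C ∩ Finset.univ.image (fun i : Fin r => (j, i))).card) ∧
      n * (r - d + 1) ≤ C.card := by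
  intro C hC
  have hrow (j : Fin n) : r - d + 1 ≤ (C ∩ univ.image (fun i : Fin r => (j, i))).card := by
    have hlt := hC.card_lt_card_inter_add_s1 (hclique j)
    rw [card_univ_image_prodMk, Fintype.card_fin, inter_comm] at hlt
    omega
  refine ⟨hrow, ?_⟩
  calc n * (r - d + 1) = ∑ _j : Fin n, (r - d + 1) := by simp
    _ ≤ ∑ j : Fin n, (C ∩ univ.image (fun i : Fin r => (j, i))).card :=
        sum_le_sum fun j _ => hrow j
    _ = C.card := by
        simp only [inter_univ_image_prodMk]
        exact (card_eq_sum_card_fiberwise fun _ _ => mem_univ _).symm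

/-- for a `d`-uniform `r`-partite hypergraph (`2 ≤ d ≤ r`) satisfying
condition (**) for `r` (vertices `x_{ji} = (j, i)`, parts `V_i`, each row a clique),
every vertex cover contains at least `r - d + 1` elements of each clique
`{x_{j1}, …, x_{jr}}`, and consequently has at least `n * (r - d + 1)` elements. -/
theorem vertexCover_card_lower_bound {n r d : ℕ} (hd : 2 ≤ d) (hdr : d ≤ r)
    (H : Finset (Finset (Fin n × Fin r)))
    -- every vertex lies in some hyperedge (the union of the hyperedges is the vertex set)
    (hunion : ∀ v : Fin n × Fin r, ∃ e ∈ H, v ∈ e)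
    -- `H` is `d`-uniform
    (huniform : ∀ e ∈ H, e.card = d)
    -- `H` is `r`-partite with parts `V_i = {(j, i) : j}`: no hyperedge contains two
    -- distinct vertices from the same part
    (hpartite : ∀ e ∈ H, ∀ p ∈ e, ∀ p' ∈ e, p.2 = p'.2 → p = p')
    -- condition (**): each row `{(j, 1), …, (j, r)}` is a clique
    (hclique : ∀ j : Fin n, ∀ s ⊆ Finset.univ.image (fun i : Fin r => (j, i)),
      s.card = d → s ∈ H) :
    ∀ C : Finset (Fin n × Fin r), IsVertexCover H C →
      (∀ j : Fin n, r - d + 1 ≤ (C ∩ Finset.univ.image (fun i : Fin r => (j, i))).card) ∧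
      n * (r - d + 1) ≤ C.card :=
  vertexCover_card_lower_bound_general hdr H hclique
end

section
/- Let H be a d-uniform r-partite hypergraph with 2 ≤ d ≤ r that satisfies condition (**) for r, with parts V_i = {x_{1i}, …, x_{ni}} for 1 ≤ i ≤ r. Then the set V_1 ∪ V_2 ∪ … ∪ V_{r−d+1} (the union of the first r − d + 1 parts) is a minimal vertex cover of H of cardinality n(r − d + 1). -/
open Finset

theorem IsMinimalVertexCover.of_forall_exists_inter_eq_singleton {V : Type*} [DecidableEq V]
    {H : Finset (Finset V)} {C : Finset V} (hC : IsVertexCover H C)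
    (hprivate : ∀ v ∈ C, ∃ e ∈ H, e ∩ C = {v}) : IsMinimalVertexCover H C := by
  refine ⟨hC, fun C' hC'C hC' => ?_⟩
  obtain ⟨v, hvC, hvC'⟩ := exists_of_ssubset hC'C
  obtain ⟨e, he, heC⟩ := hprivate v hvC
  obtain ⟨w, hw⟩ := hC' e he
  have hwv : w = v := by
    rw [← mem_singleton, ← heC]
    exact inter_subset_inter_left hC'C.subset hw
  exact hvC' (hwv ▸ (mem_inter.1 hw).2)

section UnionOfParts

variable {α ι : Type*} [Fintype α] [Fintype ι] [DecidableEq α] [DecidableEq ι]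
  {H : Finset (Finset (α × ι))} {d : ℕ} {S : Finset ι}

theorem isVertexCover_univ_product (huniform : ∀ e ∈ H, e.card = d)
    (hpartite : ∀ e ∈ H, Set.InjOn Prod.snd (e : Set (α × ι))) (hS : Sᶜ.card < d) :
    IsVertexCover H (univ ×ˢ S) := by
  intro e he
  have hcard : Sᶜ.card < (e.image Prod.snd).card := by
    rwa [card_image_of_injOn (hpartite e he), huniform e he]
  obtain ⟨i, hie, hiS⟩ := exists_mem_notMem_of_card_lt_card hcard
  obtain ⟨p, hpe, rfl⟩ := mem_image.1 hie
  exact ⟨p, mem_inter.2 ⟨hpe, mem_product.2 ⟨mem_univ _, by simpa using hiS⟩⟩⟩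

theorem exists_inter_univ_product_eq_singleton
    (hclique : ∀ j : α, ∀ s ⊆ univ.image (fun i : ι => (j, i)), s.card = d → s ∈ H)
    (hS : Sᶜ.card + 1 = d) {v : α × ι} (hv : v.2 ∈ S) :
    ∃ e ∈ H, e ∩ (univ ×ˢ S) = {v} := by
  refine ⟨{v.1} ×ˢ insert v.2 Sᶜ, hclique v.1 _ ?_ ?_, ?_⟩
  · intro p hp
    obtain ⟨hp1, -⟩ := mem_product.1 hp
    exact mem_image.2 ⟨p.2, mem_univ _, by rw [← mem_singleton.1 hp1]⟩
  · rw [card_product, card_singleton, card_insert_of_notMem (by simpa using hv), one_mul, hS]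
  · rw [product_inter_product, singleton_inter_of_mem (mem_univ _), insert_inter_of_mem hv,
      inter_comm, inter_compl, insert_empty, singleton_product_singleton]

theorem isMinimalVertexCover_univ_product (huniform : ∀ e ∈ H, e.card = d)
    (hpartite : ∀ e ∈ H, Set.InjOn Prod.snd (e : Set (α × ι)))
    (hclique : ∀ j : α, ∀ s ⊆ univ.image (fun i : ι => (j, i)), s.card = d → s ∈ H)
    (hS : Sᶜ.card + 1 = d) : IsMinimalVertexCover H (univ ×ˢ S) :=
  .of_forall_exists_inter_eq_singleton (isVertexCover_univ_product huniform hpartite (by omega))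
    fun _ hv => exists_inter_univ_product_eq_singleton hclique hS (mem_product.1 hv).2

end UnionOfParts

theorem union_first_parts_isMinimalVertexCover_general {n r d : ℕ} (hd : 2 ≤ d) (hdr : d ≤ r)
    (H : Finset (Finset (Fin n × Fin r)))
    -- `H` is `d`-uniform
    (huniform : ∀ e ∈ H, e.card = d)
    -- `H` is `r`-partite with parts `V_i = {(j, i) : j}`: no hyperedge contains two
    -- distinct vertices from the same part
    (hpartite : ∀ e ∈ H, ∀ p ∈ e, ∀ p' ∈ e, p.2 = p'.2 → p = p')
    -- condition (**): each row `{(j, 1), …, (j, r)}` is a clique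
    (hclique : ∀ j : Fin n, ∀ s ⊆ Finset.univ.image (fun i : Fin r => (j, i)),
      s.card = d → s ∈ H) :
    IsMinimalVertexCover H
      (Finset.univ.filter (fun p : Fin n × Fin r => p.2.val < r - d + 1)) ∧
    (Finset.univ.filter (fun p : Fin n × Fin r => p.2.val < r - d + 1)).card =
      n * (r - d + 1) := by
  set S : Finset (Fin r) := {i | i.val < r - d + 1}
  have hS : S.card = r - d + 1 := by
    rw [Fin.card_filter_val_lt]
    omega
  have hC : univ.filter (fun p : Fin n × Fin r => p.2.val < r - d + 1) = univ ×ˢ S := by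
    ext p
    simp [S]
  rw [hC]
  refine ⟨isMinimalVertexCover_univ_product huniform
    (fun e he p hp p' hp' => hpartite e he p hp p' hp') hclique ?_, ?_⟩
  · rw [card_compl, Fintype.card_fin, hS]
    omega
  · rw [card_product, card_univ, Fintype.card_fin, hS]

/-- for a `d`-uniform `r`-partite hypergraph (`2 ≤ d ≤ r`) satisfying
condition (**) for `r` (vertices `x_{ji} = (j, i)`, parts `V_i`, each row a clique),
the union of the first `r - d + 1` parts `V_1 ∪ … ∪ V_{r-d+1}` is a minimal vertex
cover of cardinality `n * (r - d + 1)`. -/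
theorem union_first_parts_isMinimalVertexCover {n r d : ℕ} (hd : 2 ≤ d) (hdr : d ≤ r)
    (H : Finset (Finset (Fin n × Fin r)))
    -- every vertex lies in some hyperedge (the union of the hyperedges is the vertex set)
    (hunion : ∀ v : Fin n × Fin r, ∃ e ∈ H, v ∈ e)
    -- `H` is `d`-uniform
    (huniform : ∀ e ∈ H, e.card = d)
    -- `H` is `r`-partite with parts `V_i = {(j, i) : j}`: no hyperedge contains two
    -- distinct vertices from the same part
    (hpartite : ∀ e ∈ H, ∀ p ∈ e, ∀ p' ∈ e, p.2 = p'.2 → p = p')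
    -- condition (**): each row `{(j, 1), …, (j, r)}` is a clique
    (hclique : ∀ j : Fin n, ∀ s ⊆ Finset.univ.image (fun i : Fin r => (j, i)),
      s.card = d → s ∈ H) :
    IsMinimalVertexCover H
      (Finset.univ.filter (fun p : Fin n × Fin r => p.2.val < r - d + 1)) ∧
    (Finset.univ.filter (fun p : Fin n × Fin r => p.2.val < r - d + 1)).card =
      n * (r - d + 1) :=
  union_first_parts_isMinimalVertexCover_general hd hdr H huniform hpartite hclique
end

section
/- Let H be a d-uniform r-partite hypergraph with 2 ≤ d ≤ r that satisfies condition (**) for r, with parts V_i = {x_{1i}, …, x_{ni}} for 1 ≤ i ≤ r. Then H is unmixed if and only if the following holds: for every 1 ≤ q ≤ n, if 𝔢_1, 𝔢_2, …, 𝔢_{r−d+2} are submaximal edges of H and i_1, i_2, …, i_{r−d+2} are distinct indices in {1, …, r} with 𝔢_1 ∼ x_{q i_1}, 𝔢_2 ∼ x_{q i_2}, …, 𝔢_{r−d+2} ∼ x_{q i_{r−d+2}}, then the set 𝔢_1 ∪ 𝔢_2 ∪ … ∪ 𝔢_{r−d+2} is not independent. -/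
/-- `M` is an independent set of `H`: it contains no hyperedge. -/
def IsIndependent {V : Type*} (H : Finset (Finset V)) (M : Finset V) : Prop :=
  ∀ e ∈ H, ¬ e ⊆ M

/-- `𝔢` is a submaximal edge of the `d`-uniform hypergraph `H`: a `(d-1)`-element
subset of some hyperedge. -/
def IsSubmaximalEdge {V : Type*} (H : Finset (Finset V)) (d : ℕ) (𝔢 : Finset V) : Prop :=
  (∃ e ∈ H, 𝔢 ⊆ e) ∧ 𝔢.card = d - 1

/-!
Minimal vertex covers are the complements of maximal independent sets, so `H` is unmixed iff all
maximal independent sets have the same size. As every row is a clique, an independent set meets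
each row in at most `d - 1` vertices, while any `d - 1` columns form a maximal independent set
meeting every row in exactly `d - 1` vertices. Hence `H` is unmixed iff every maximal independent
set `M` meets every row in `d - 1` vertices. If `M` meets row `q` in at most `d - 2` vertices, at
least `r - d + 2` vertices `x_{q i}` of that row lie outside `M`, and maximality provides edges
`e_i ∋ x_{q i}` with `e_i \ {x_{q i}} ⊆ M`: submaximal edges with independent union. Conversely,
such a family extends to a maximal independent set missing `r - d + 2` vertices of row `q`.
-/

open Finset

section Hypergraph

variable {V : Type*} [DecidableEq V] {H : Finset (Finset V)} {C M : Finset V} {d : ℕ}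

theorem isVertexCover_iff_isIndependent_compl [Fintype V] :
    IsVertexCover H C ↔ IsIndependent H Cᶜ := by
  simp only [IsVertexCover, IsIndependent, subset_compl_iff_disjoint_right,
    not_disjoint_iff_nonempty_inter]

theorem isMinimalVertexCover_iff_maximal_compl [Fintype V] :
    IsMinimalVertexCover H C ↔ Maximal (IsIndependent H) Cᶜ := by
  simp only [IsMinimalVertexCover, maximal_iff_forall_gt, isVertexCover_iff_isIndependent_compl]
  refine and_congr_right' ⟨fun h N hN => ?_, fun h C' hC' => h (compl_lt_compl_iff_lt.2 hC')⟩
  simpa using h Nᶜ (by rwa [← compl_lt_compl_iff_lt, compl_compl])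

theorem isUnmixed_iff_maximal_isIndependent_card_eq [Fintype V] :
    IsUnmixed H ↔ ∀ M₁ M₂, Maximal (IsIndependent H) M₁ → Maximal (IsIndependent H) M₂ →
      #M₁ = #M₂ := by
  have card_compl_eq_iff (A B : Finset V) : #Aᶜ = #Bᶜ ↔ #A = #B := by
    have := card_le_univ A
    have := card_le_univ B
    rw [card_compl, card_compl]
    omega
  simp only [IsUnmixed, isMinimalVertexCover_iff_maximal_compl]
  refine ⟨fun h M₁ M₂ h₁ h₂ => ?_, fun h C₁ C₂ h₁ h₂ => (card_compl_eq_iff _ _).1 (h _ _ h₁ h₂)⟩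
  rw [← card_compl_eq_iff]
  exact h _ _ (by rwa [compl_compl]) (by rwa [compl_compl])

theorem exists_mem_subset_insert_of_maximal (hM : Maximal (IsIndependent H) M) {v : V}
    (hv : v ∉ M) : ∃ e ∈ H, v ∈ e ∧ e ⊆ insert v M := by
  have : ¬ IsIndependent H (insert v M) := fun h =>
    hv (hM.2 h (subset_insert v M) (mem_insert_self v M))
  simp only [IsIndependent, not_forall, not_not] at this
  obtain ⟨e, he, hsub⟩ := this
  refine ⟨e, he, by_contra fun hve => hM.1 e he ?_, hsub⟩
  exact (subset_insert_iff_of_notMem hve).1 hsub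

theorem maximal_of_forall_exists_subset_insert (hM : IsIndependent H M)
    (h : ∀ v ∉ M, ∃ e ∈ H, e ⊆ insert v M) : Maximal (IsIndependent H) M := by
  refine ⟨hM, fun N hN hMN v hvN => by_contra fun hv => ?_⟩
  obtain ⟨e, he, hsub⟩ := h v hv
  exact hN e he (hsub.trans (insert_subset hvN hMN))

theorem isSubmaximalEdge_erase (huniform : ∀ e ∈ H, #e = d) {e : Finset V} (he : e ∈ H) {v : V}
    (hv : v ∈ e) : IsSubmaximalEdge H d (e.erase v) :=
  ⟨⟨e, he, erase_subset v e⟩, by rw [card_erase_of_mem hv, huniform e he]⟩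

end Hypergraph

section Grid

variable {α ι : Type*} [DecidableEq α] [DecidableEq ι]
  {H : Finset (Finset (α × ι))} {M : Finset (α × ι)} {d : ℕ}

def row [Fintype ι] (M : Finset (α × ι)) (j : α) : Finset ι :=
  univ.filter fun i => (j, i) ∈ M

theorem card_eq_sum_card_row [Fintype α] [Fintype ι] (M : Finset (α × ι)) :
    #M = ∑ j, #(row M j) := by
  simp only [row, card_filter]
  rw [← Fintype.sum_prod_type' (f := fun j i => if (j, i) ∈ M then 1 else 0), ← card_filter]
  simp

theorem row_univ_product [Fintype α] [Fintype ι] (K : Finset ι) (j : α) :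
    row (univ ×ˢ K) j = K := by
  ext
  simp [row]

theorem card_row_lt_of_isIndependent [Fintype ι]
    (hrow : ∀ (j : α) (s : Finset ι), #s = d → s.image (Prod.mk j) ∈ H)
    (hM : IsIndependent H M) (j : α) : #(row M j) < d := by
  by_contra! h
  obtain ⟨s, hs, hsd⟩ := exists_subset_card_eq h
  refine hM _ (hrow j s hsd) fun p hp => ?_
  obtain ⟨i, hi, rfl⟩ := mem_image.1 hp
  exact (mem_filter.1 (hs hi)).2

theorem maximal_isIndependent_univ_product [Fintype α]
    (hpartite : ∀ e ∈ H, Set.InjOn Prod.snd (e : Set (α × ι))) (huniform : ∀ e ∈ H, #e = d)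
    (hrow : ∀ (j : α) (s : Finset ι), #s = d → s.image (Prod.mk j) ∈ H)
    {K : Finset ι} (hK : #K + 1 = d) : Maximal (IsIndependent H) (univ ×ˢ K) := by
  refine maximal_of_forall_exists_subset_insert (fun e he hsub => ?_) ?_
  · have hcols : e.image Prod.snd ⊆ K :=
      image_subset_iff.2 fun p hp => (mem_product.1 (hsub hp)).2
    have := card_le_card hcols
    rw [card_image_of_injOn (hpartite e he), huniform e he] at this
    omega
  · rintro ⟨j, i⟩ hv
    have hi : i ∉ K := by simpa using hv
    refine ⟨(insert i K).image (Prod.mk j), hrow j _ (by rw [card_insert_of_notMem hi, hK]), ?_⟩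
    rw [image_insert]
    exact insert_subset_insert _ (image_subset_iff.2 fun k hk => mem_product.2 ⟨mem_univ j, hk⟩)

theorem isUnmixed_iff_forall_maximal_card_row [Fintype α] [Fintype ι]
    (hpartite : ∀ e ∈ H, Set.InjOn Prod.snd (e : Set (α × ι))) (huniform : ∀ e ∈ H, #e = d)
    (hrow : ∀ (j : α) (s : Finset ι), #s = d → s.image (Prod.mk j) ∈ H)
    (hd : 1 ≤ d) (hdι : d ≤ Fintype.card ι + 1) :
    IsUnmixed H ↔ ∀ M, Maximal (IsIndependent H) M → ∀ j, #(row M j) + 1 = d := by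
  rw [isUnmixed_iff_maximal_isIndependent_card_eq]
  constructor
  · intro h M hM
    obtain ⟨K, -, hK⟩ := exists_subset_card_eq (s := (univ : Finset ι)) (n := d - 1)
      (by rw [card_univ]; omega)
    have hM₀ := maximal_isIndependent_univ_product hpartite huniform hrow (by omega : #K + 1 = d)
    have hsum : ∑ j, #(row M j) = ∑ _j : α, #K := by
      simpa only [card_eq_sum_card_row, row_univ_product] using h _ _ hM hM₀
    have hle (j : α) (_ : j ∈ univ) : #(row M j) ≤ #K := by
      have := card_row_lt_of_isIndependent hrow hM.1 j
      omega
    intro j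
    have := (sum_eq_sum_iff_of_le hle).1 hsum j (mem_univ j)
    omega
  · intro h M₁ M₂ h₁ h₂
    rw [card_eq_sum_card_row, card_eq_sum_card_row]
    refine sum_congr rfl fun j _ => ?_
    have := h M₁ h₁ j
    have := h M₂ h₂ j
    omega

theorem not_isIndependent_biUnion_of_forall_maximal_card_row [Fintype α] [Fintype ι]
    {κ : Type*} [Fintype κ]
    (hfull : ∀ M, Maximal (IsIndependent H) M → ∀ j, #(row M j) + 1 = d)
    (hκ : Fintype.card ι + 2 ≤ Fintype.card κ + d) (q : α) {f : κ → ι} (hf : f.Injective)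
    {𝔢 : κ → Finset (α × ι)} (h𝔢 : ∀ t, insert (q, f t) (𝔢 t) ∈ H) :
    ¬ IsIndependent H (univ.biUnion 𝔢) := by
  intro hU
  obtain ⟨M, hUM, hM⟩ := Finite.exists_le_maximal hU
  have hdisj : Disjoint (row M q) (univ.image f) := by
    simp only [disjoint_right, mem_image, mem_univ, true_and, row, mem_filter]
    rintro _ ⟨t, rfl⟩ hqt
    exact hM.1 _ (h𝔢 t) (insert_subset hqt ((subset_biUnion_of_mem 𝔢 (mem_univ t)).trans hUM))
  have := card_le_univ (row M q ∪ univ.image f)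
  rw [card_union_of_disjoint hdisj, card_image_of_injective _ hf, card_univ] at this
  have := hfull M hM q
  omega

theorem card_row_add_one_eq_of_forall_not_isIndependent [Fintype ι] {κ : Type*} [Fintype κ]
    (huniform : ∀ e ∈ H, #e = d)
    (hrow : ∀ (j : α) (s : Finset ι), #s = d → s.image (Prod.mk j) ∈ H)
    (hκ : Fintype.card κ + d ≤ Fintype.card ι + 2)
    (hcond : ∀ q (f : κ → ι), f.Injective → ∀ 𝔢 : κ → Finset (α × ι),
      (∀ t, IsSubmaximalEdge H d (𝔢 t)) → (∀ t, insert (q, f t) (𝔢 t) ∈ H) →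
        ¬ IsIndependent H (univ.biUnion 𝔢))
    (hM : Maximal (IsIndependent H) M) (q : α) : #(row M q) + 1 = d := by
  have hlt := card_row_lt_of_isIndependent hrow hM.1 q
  by_contra hne
  obtain ⟨g⟩ : Nonempty (κ ↪ ((row M q)ᶜ : Finset ι)) :=
    Function.Embedding.nonempty_of_card_le (by simp only [Fintype.card_coe, card_compl]; omega)
  set f : κ → ι := fun t => g t
  have hf (t : κ) : (q, f t) ∉ M := by simpa [row, f] using (g t).2
  choose e he hfe hes using fun t => exists_mem_subset_insert_of_maximal hM (hf t)
  refine hcond q f (Subtype.val_injective.comp g.injective) (fun t => (e t).erase (q, f t))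
    (fun t => isSubmaximalEdge_erase huniform (he t) (hfe t))
    (fun t => by rw [insert_erase (hfe t)]; exact he t) fun e' he' hsub => hM.1 e' he' ?_
  exact hsub.trans (biUnion_subset.2 fun t _ => subset_insert_iff.1 (hes t))

end Grid

theorem unmixed_iff_submaximal_condition_general {n r d : ℕ} (hd : 2 ≤ d) (hdr : d ≤ r)
    (H : Finset (Finset (Fin n × Fin r)))
    -- `H` is `d`-uniform
    (huniform : ∀ e ∈ H, e.card = d)
    -- `H` is `r`-partite with parts `V_i = {(j, i) : j}`: no hyperedge contains two
    -- distinct vertices from the same part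
    (hpartite : ∀ e ∈ H, ∀ p ∈ e, ∀ p' ∈ e, p.2 = p'.2 → p = p')
    -- condition (**): each row `{(j, 1), …, (j, r)}` is a clique
    (hclique : ∀ j : Fin n, ∀ s ⊆ Finset.univ.image (fun i : Fin r => (j, i)),
      s.card = d → s ∈ H) :
    IsUnmixed H ↔
      ∀ q : Fin n, ∀ ι : Fin (r - d + 2) → Fin r, Function.Injective ι →
        ∀ 𝔢 : Fin (r - d + 2) → Finset (Fin n × Fin r),
          (∀ t, IsSubmaximalEdge H d (𝔢 t)) →
          (∀ t, insert (q, ι t) (𝔢 t) ∈ H) →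
          ¬ IsIndependent H (Finset.univ.biUnion 𝔢) := by
  have hrow (j : Fin n) (s : Finset (Fin r)) (hs : #s = d) : s.image (Prod.mk j) ∈ H :=
    hclique j _ (image_subset_image (subset_univ s))
      (by rwa [card_image_of_injective _ (Prod.mk_right_injective j)])
  rw [isUnmixed_iff_forall_maximal_card_row hpartite
    huniform hrow (by omega) (by simp only [Fintype.card_fin]; omega)]
  refine ⟨fun hfull q ι hι 𝔢 _ h𝔢 => ?_, fun hcond M hM j => ?_⟩
  · exact not_isIndependent_biUnion_of_forall_maximal_card_row hfull
      (by simp only [Fintype.card_fin]; omega) q hι h𝔢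
  · exact card_row_add_one_eq_of_forall_not_isIndependent huniform hrow
      (by simp only [Fintype.card_fin]; omega) hcond hM j

/-- main theorem: a `d`-uniform `r`-partite hypergraph (`2 ≤ d ≤ r`)
satisfying condition (**) for `r` (vertices `x_{ji} = (j, i)`, parts `V_i`, each row a
clique) is unmixed iff for every row `q` and every family of `r - d + 2` submaximal
edges `𝔢_t ∼ x_{q i_t}` with distinct indices `i_t`, the union `⋃ 𝔢_t` is not
independent. -/
theorem unmixed_iff_submaximal_condition {n r d : ℕ} (hd : 2 ≤ d) (hdr : d ≤ r)
    (H : Finset (Finset (Fin n × Fin r)))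
    -- every vertex lies in some hyperedge (the union of the hyperedges is the vertex set)
    (hunion : ∀ v : Fin n × Fin r, ∃ e ∈ H, v ∈ e)
    -- `H` is `d`-uniform
    (huniform : ∀ e ∈ H, e.card = d)
    -- `H` is `r`-partite with parts `V_i = {(j, i) : j}`: no hyperedge contains two
    -- distinct vertices from the same part
    (hpartite : ∀ e ∈ H, ∀ p ∈ e, ∀ p' ∈ e, p.2 = p'.2 → p = p')
    -- condition (**): each row `{(j, 1), …, (j, r)}` is a clique
    (hclique : ∀ j : Fin n, ∀ s ⊆ Finset.univ.image (fun i : Fin r => (j, i)),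
      s.card = d → s ∈ H) :
    IsUnmixed H ↔
      ∀ q : Fin n, ∀ ι : Fin (r - d + 2) → Fin r, Function.Injective ι →
        ∀ 𝔢 : Fin (r - d + 2) → Finset (Fin n × Fin r),
          (∀ t, IsSubmaximalEdge H d (𝔢 t)) →
          (∀ t, insert (q, ι t) (𝔢 t) ∈ H) →
          ¬ IsIndependent H (Finset.univ.biUnion 𝔢) :=
  unmixed_iff_submaximal_condition_general hd hdr H huniform hpartite hclique
end

section
/- Let G be a finite simple bipartite graph without isolated vertices. Then G is unmixed if and only if there is a bipartition V_1 = {x_1, …, x_g}, V_2 = {y_1, …, y_g} of G such that: (a) {x_i, y_i} is an edge of G for all i, and (b) whenever {x_i, y_j} and {x_j, y_k} are edges of G and i, j, k are distinct, {x_i, y_k} is also an edge of G. -/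
/-!
If `G` is unmixed, both sides of the bipartition are minimal, hence minimum, vertex covers.
For `S ⊆ V₁` the set `(V₁ \ S) ∪ N(S)` is again a vertex cover, which is Hall's condition, so
there is a perfect matching `x_i y_i`. A vertex cover meets every matching edge, so its size is
`g` plus the number of `i` with both `x_i` and `y_i` in it. If `x_i y_j` and `x_j y_k` are edges
but `x_i y_k` is not, a minimal cover inside `V \ {x_i, y_k}` contains both `x_j` and `y_j`, hence
has more than `g` elements.

Conversely, if a minimal cover contained both `x_t` and `y_t`, each of them would have a neighbour
outside the cover, say `y_b` and `x_a`; then `x_a y_b` is an edge by (b), or by (a) if `a = b`,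
and it is not covered.
-/

/-- `C` is a vertex cover of the graph `G`: every edge has an endpoint in `C`. -/
def Graph.IsVertexCover {V : Type*} (G : SimpleGraph V) (C : Finset V) : Prop :=
  ∀ u v : V, G.Adj u v → u ∈ C ∨ v ∈ C

/-- `C` is a minimal vertex cover of the graph `G`. -/
def Graph.IsMinimalVertexCover {V : Type*} (G : SimpleGraph V) (C : Finset V) : Prop :=
  Graph.IsVertexCover G C ∧ ∀ C' ⊂ C, ¬ Graph.IsVertexCover G C'

/-- `G` is unmixed: all minimal vertex covers have the same cardinality. -/
def Graph.IsUnmixed {V : Type*} (G : SimpleGraph V) : Prop :=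
  ∀ C₁ C₂ : Finset V, Graph.IsMinimalVertexCover G C₁ → Graph.IsMinimalVertexCover G C₂ →
    C₁.card = C₂.card

open Finset Function

theorem Sum.elim_bijective_iff {α β γ : Type*} {f : α → γ} {g : β → γ} :
    Bijective (Sum.elim f g) ↔
      Injective f ∧ Injective g ∧ (∀ a b, f a ≠ g b) ∧ ∀ c, (∃ a, c = f a) ∨ ∃ b, c = g b := by
  simp only [Bijective, Sum.elim_injective, Surjective, Sum.exists, Sum.elim_inl, Sum.elim_inr,
    and_assoc, eq_comm]

namespace Graph

variable {V : Type*} {G : SimpleGraph V}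

theorem IsVertexCover.exists_isMinimalVertexCover_subset {C : Finset V}
    (hC : IsVertexCover G C) : ∃ C' ⊆ C, IsMinimalVertexCover G C' := by
  induction C using Finset.strongInduction with
  | H C ih =>
    by_cases hmin : ∃ C' ⊂ C, IsVertexCover G C'
    · obtain ⟨C', hC'C, hC'⟩ := hmin
      obtain ⟨C'', hC''C', hC''⟩ := ih C' hC'C hC'
      exact ⟨C'', hC''C'.trans hC'C.subset, hC''⟩
    · exact ⟨C, subset_rfl, hC, fun C' hC'C hC' => hmin ⟨C', hC'C, hC'⟩⟩

theorem IsUnmixed.card_le_of_isVertexCover (hU : IsUnmixed G) {A C : Finset V}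
    (hA : IsMinimalVertexCover G A) (hC : IsVertexCover G C) : A.card ≤ C.card := by
  obtain ⟨C', hC'C, hC'⟩ := hC.exists_isMinimalVertexCover_subset
  exact (hU A C' hA hC').trans_le (card_le_card hC'C)

theorem IsMinimalVertexCover.exists_adj_notMem [DecidableEq V] {C : Finset V}
    (hC : IsMinimalVertexCover G C) {v : V} (hv : v ∈ C) : ∃ u, G.Adj v u ∧ u ∉ C := by
  have hnot := hC.2 (C.erase v) (erase_ssubset hv)
  simp only [IsVertexCover, not_forall, mem_erase, not_or, not_and_or, not_not] at hnot
  obtain ⟨a, b, hab, ha, hb⟩ := hnot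
  rcases hC.1 a b hab with haC | hbC
  · obtain rfl : a = v := ha.resolve_right (not_not.mpr haC)
    exact ⟨b, hab, hb.resolve_left hab.ne'⟩
  · obtain rfl : b = v := hb.resolve_right (not_not.mpr hbC)
    exact ⟨a, hab.symm, ha.resolve_left hab.ne⟩

theorem isMinimalVertexCover_of_bipartition {V₁ V₂ : Finset V} (hdisj : Disjoint V₁ V₂)
    (hcross : ∀ u v, G.Adj u v → (u ∈ V₁ ∧ v ∈ V₂) ∨ (u ∈ V₂ ∧ v ∈ V₁))
    (hiso : ∀ v, ∃ u, G.Adj v u) : IsMinimalVertexCover G V₁ := by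
  refine ⟨fun u v huv => (hcross u v huv).imp And.left And.right, fun C hCV₁ hC => ?_⟩
  obtain ⟨v, hvV₁, hvC⟩ := exists_of_ssubset hCV₁
  obtain ⟨u, hvu⟩ := hiso v
  have huV₁ : u ∈ V₁ := hCV₁.subset ((hC v u hvu).resolve_left hvC)
  rcases hcross v u hvu with ⟨-, huV₂⟩ | ⟨hvV₂, -⟩
  · exact disjoint_left.mp hdisj huV₁ huV₂
  · exact disjoint_left.mp hdisj hvV₁ hvV₂

theorem exists_injective_adj_of_forall_card_le [Fintype V] {A : Finset V}
    (hAcov : IsVertexCover G A) (hA : ∀ C, IsVertexCover G C → A.card ≤ C.card) :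
    ∃ f : A → V, Injective f ∧ ∀ a : A, G.Adj a (f a) := by
  classical
  refine (Fintype.all_card_le_filter_rel_iff_exists_injective fun (a : A) v => G.Adj a v).mp
    fun S => ?_
  set S' := S.map (Embedding.subtype (· ∈ A))
  set N : Finset V := {v | ∃ a ∈ S, G.Adj a v}
  have hS' : S' ⊆ A := fun v hv => by
    obtain ⟨a, -, rfl⟩ := mem_map.mp hv
    exact a.2
  have hN : ∀ a ∈ S', ∀ v, G.Adj a v → v ∈ N := fun a ha v hav => by
    obtain ⟨b, hb, rfl⟩ := mem_map.mp ha
    exact mem_filter.mpr ⟨mem_univ v, b, hb, hav⟩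
  have hcov : IsVertexCover G (A \ S' ∪ N) := fun u v huv => by
    simp only [mem_union, mem_sdiff]
    by_cases hu : u ∈ S'
    · exact Or.inr (Or.inr (hN u hu v huv))
    by_cases hv : v ∈ S'
    · exact Or.inl (Or.inr (hN v hv u huv.symm))
    rcases hAcov u v huv with huA | hvA
    · exact Or.inl (Or.inl ⟨huA, hu⟩)
    · exact Or.inr (Or.inl ⟨hvA, hv⟩)
  have hcard : A.card ≤ (A \ S').card + N.card := (hA _ hcov).trans (card_union_le _ _)
  have hSA : S.card ≤ A.card := by simpa [S'] using card_le_card hS'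
  rw [card_sdiff_of_subset hS', card_map] at hcard
  omega

theorem exists_perfect_matching_of_bipartition [Fintype V] [DecidableEq V] {V₁ V₂ : Finset V}
    (hdisj : Disjoint V₁ V₂) (huniv : V₁ ∪ V₂ = univ)
    (hcross : ∀ u v, G.Adj u v → (u ∈ V₁ ∧ v ∈ V₂) ∨ (u ∈ V₂ ∧ v ∈ V₁))
    (hV₁ : ∀ C, IsVertexCover G C → V₁.card ≤ C.card)
    (hV₂ : ∀ C, IsVertexCover G C → V₂.card ≤ C.card) :
    ∃ x y : Fin V₁.card → V, Bijective (Sum.elim x y) ∧ (∀ v, v ∈ V₁ ↔ ∃ i, v = x i) ∧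
      (∀ v, v ∈ V₂ ↔ ∃ j, v = y j) ∧ ∀ i, G.Adj (x i) (y i) := by
  have hV₁cov : IsVertexCover G V₁ := fun u v huv => (hcross u v huv).imp And.left And.right
  have hV₂cov : IsVertexCover G V₂ := fun u v huv => (hcross u v huv).symm.imp And.left And.right
  obtain ⟨f, hf, hadj⟩ := exists_injective_adj_of_forall_card_le hV₁cov hV₁
  have hfV₂ : ∀ a, f a ∈ V₂ := fun a =>
    ((hcross a (f a) (hadj a)).resolve_right fun h => disjoint_left.mp hdisj a.2 h.1).2
  set e := V₁.equivFin.symm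
  set x : Fin V₁.card → V := fun i => e i
  set y : Fin V₁.card → V := fun i => f (e i)
  have hinj : Injective (Sum.elim x y) :=
    (Subtype.val_injective.comp e.injective).sumElim (hf.comp e.injective)
      fun i j hij => disjoint_left.mp hdisj (e i).2
        ((show (e i : V) = f (e j) from hij) ▸ hfV₂ _)
  have hcard : Fintype.card (Fin V₁.card ⊕ Fin V₁.card) = Fintype.card V := by
    rw [Fintype.card_sum, Fintype.card_fin, ← card_univ, ← huniv, card_union_of_disjoint hdisj,
      le_antisymm (hV₂ V₁ hV₁cov) (hV₁ V₂ hV₂cov)]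
  have hbij : Bijective (Sum.elim x y) :=
    (Fintype.bijective_iff_injective_and_card _).mpr ⟨hinj, hcard⟩
  refine ⟨x, y, hbij, fun v => ⟨fun hv => ⟨V₁.equivFin ⟨v, hv⟩, by simp [x, e]⟩, ?_⟩,
    fun v => ⟨fun hv => ?_, ?_⟩, fun i => hadj (e i)⟩
  · rintro ⟨i, rfl⟩
    exact (e i).2
  · obtain ⟨i | j, rfl⟩ := hbij.surjective v
    · exact absurd hv (disjoint_left.mp hdisj (e i).2)
    · exact ⟨j, rfl⟩
  · rintro ⟨j, rfl⟩
    exact hfV₂ (e j)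

section PerfectMatching

variable [DecidableEq V] {g : ℕ} {x y : Fin g → V}

theorem card_eq_add_card_filter [Fintype V] (hbij : Bijective (Sum.elim x y)) {C : Finset V}
    (hC : ∀ t, x t ∈ C ∨ y t ∈ C) : C.card = g + #{t | x t ∈ C ∧ y t ∈ C} :=
  calc C.card = ∑ v, if v ∈ C then 1 else 0 := by simp
    _ = ∑ s, if Sum.elim x y s ∈ C then 1 else 0 := (hbij.sum_comp fun v => _).symm
    _ = ∑ t, ((if x t ∈ C then 1 else 0) + if y t ∈ C then 1 else 0) := by
      rw [Fintype.sum_sum_type, sum_add_distrib]; rfl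
    _ = ∑ t, (1 + if x t ∈ C ∧ y t ∈ C then 1 else 0) := sum_congr rfl fun t _ => by
      rcases hC t with h | h <;> split_ifs <;> simp_all
    _ = g + #{t | x t ∈ C ∧ y t ∈ C} := by simp [sum_add_distrib, sum_boole]

theorem IsUnmixed.adj_of_adj_of_adj [Fintype V] (hU : IsUnmixed G) {A : Finset V}
    (hA : IsMinimalVertexCover G A) (hAg : A.card = g) (hbij : Bijective (Sum.elim x y))
    (hmatch : ∀ i, G.Adj (x i) (y i)) {i j k : Fin g}
    (hij : G.Adj (x i) (y j)) (hjk : G.Adj (x j) (y k)) : G.Adj (x i) (y k) := by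
  by_contra hik
  have hcov : IsVertexCover G (univ \ {x i, y k}) := fun u v huv => by
    simp only [mem_sdiff, mem_univ, true_and, mem_insert, mem_singleton]
    by_contra! h
    rcases h with ⟨rfl | rfl, rfl | rfl⟩
    exacts [huv.ne rfl, hik huv, hik huv.symm, huv.ne rfl]
  obtain ⟨C, hCsub, hC⟩ := hcov.exists_isMinimalVertexCover_subset
  have hxi : x i ∉ C := fun h => by simpa using hCsub h
  have hyk : y k ∉ C := fun h => by simpa using hCsub h
  have hj : x j ∈ C ∧ y j ∈ C :=
    ⟨(hC.1 _ _ hjk).resolve_right hyk, (hC.1 _ _ hij).resolve_left hxi⟩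
  have hdouble : 0 < #{t | x t ∈ C ∧ y t ∈ C} := card_pos.mpr ⟨j, by simpa using hj⟩
  have hcard := card_eq_add_card_filter hbij fun t => hC.1 _ _ (hmatch t)
  have := hU C A hC hA
  omega

theorem IsMinimalVertexCover.not_both_mem (hxy : ∀ i j, x i ≠ y j)
    (hadj : ∀ u v, G.Adj u v →
      ((∃ i, u = x i) ∧ (∃ j, v = y j)) ∨ ((∃ j, u = y j) ∧ (∃ i, v = x i)))
    (hmatch : ∀ i, G.Adj (x i) (y i))
    (hb : ∀ i j k, i ≠ j → j ≠ k → i ≠ k →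
      G.Adj (x i) (y j) → G.Adj (x j) (y k) → G.Adj (x i) (y k))
    {C : Finset V} (hC : IsMinimalVertexCover G C) (t : Fin g) : ¬ (x t ∈ C ∧ y t ∈ C) := by
  rintro ⟨hxt, hyt⟩
  obtain ⟨u, hxu, huC⟩ := hC.exists_adj_notMem hxt
  obtain ⟨w, hyw, hwC⟩ := hC.exists_adj_notMem hyt
  obtain ⟨b, rfl⟩ : ∃ b, u = y b := by
    rcases hadj _ _ hxu with ⟨-, hu⟩ | ⟨⟨j, hj⟩, -⟩
    exacts [hu, absurd hj (hxy t j)]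
  obtain ⟨a, rfl⟩ : ∃ a, w = x a := by
    rcases hadj _ _ hyw with ⟨⟨i, hi⟩, -⟩ | ⟨-, hw⟩
    exacts [absurd hi.symm (hxy i t), hw]
  have hat : a ≠ t := by rintro rfl; exact hwC hxt
  have htb : t ≠ b := by rintro rfl; exact huC hyt
  have hab : G.Adj (x a) (y b) := by
    by_cases hab : a = b
    · exact hab ▸ hmatch a
    · exact hb a t b hat htb hab hyw.symm hxu
  exact (hC.1 _ _ hab).elim hwC huC

theorem IsMinimalVertexCover.card_eq [Fintype V] (hbij : Bijective (Sum.elim x y))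
    (hadj : ∀ u v, G.Adj u v →
      ((∃ i, u = x i) ∧ (∃ j, v = y j)) ∨ ((∃ j, u = y j) ∧ (∃ i, v = x i)))
    (hmatch : ∀ i, G.Adj (x i) (y i))
    (hb : ∀ i j k, i ≠ j → j ≠ k → i ≠ k →
      G.Adj (x i) (y j) → G.Adj (x j) (y k) → G.Adj (x i) (y k))
    {C : Finset V} (hC : IsMinimalVertexCover G C) : C.card = g := by
  have hxy : ∀ i j, x i ≠ y j := fun i j => hbij.injective.ne Sum.inl_ne_inr
  rw [card_eq_add_card_filter hbij fun t => hC.1 _ _ (hmatch t),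
    filter_false_of_mem fun t _ => hC.not_both_mem hxy hadj hmatch hb t, card_empty, add_zero]

end PerfectMatching

end Graph

/-- Villarreal: a finite simple bipartite graph `G` without isolated
vertices is unmixed iff there is a bipartition `V₁ = {x_1, …, x_g}`,
`V₂ = {y_1, …, y_g}` of `G` such that (a) `{x_i, y_i}` is an edge for all `i`, and
(b) if `{x_i, y_j}` and `{x_j, y_k}` are edges and `i, j, k` are distinct, then
`{x_i, y_k}` is an edge. -/
theorem bipartite_unmixed_iff {V : Type*} [Fintype V] [DecidableEq V] (G : SimpleGraph V)
    -- `G` is bipartite: there is a bipartition of the vertex set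
    (hbip : ∃ V₁ V₂ : Finset V, Disjoint V₁ V₂ ∧ V₁ ∪ V₂ = Finset.univ ∧
      ∀ u v : V, G.Adj u v → (u ∈ V₁ ∧ v ∈ V₂) ∨ (u ∈ V₂ ∧ v ∈ V₁))
    -- `G` has no isolated vertices
    (hiso : ∀ v : V, ∃ u : V, G.Adj v u) :
    Graph.IsUnmixed G ↔
      ∃ (g : ℕ) (x y : Fin g → V),
        Function.Injective x ∧ Function.Injective y ∧
        (∀ i j : Fin g, x i ≠ y j) ∧
        (∀ v : V, (∃ i, v = x i) ∨ (∃ j, v = y j)) ∧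
        (∀ u v : V, G.Adj u v →
          ((∃ i, u = x i) ∧ (∃ j, v = y j)) ∨ ((∃ j, u = y j) ∧ (∃ i, v = x i))) ∧
        (∀ i : Fin g, G.Adj (x i) (y i)) ∧
        (∀ i j k : Fin g, i ≠ j → j ≠ k → i ≠ k →
          G.Adj (x i) (y j) → G.Adj (x j) (y k) → G.Adj (x i) (y k)) := by
  constructor
  · intro hU
    obtain ⟨V₁, V₂, hdisj, huniv, hcross⟩ := hbip
    have hV₁ := Graph.isMinimalVertexCover_of_bipartition hdisj hcross hiso
    have hV₂ := Graph.isMinimalVertexCover_of_bipartition hdisj.symm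
      (fun u v huv => (hcross u v huv).symm) hiso
    obtain ⟨x, y, hbij, hxV₁, hyV₂, hmatch⟩ :=
      Graph.exists_perfect_matching_of_bipartition hdisj huniv hcross
        (fun _ => hU.card_le_of_isVertexCover hV₁) (fun _ => hU.card_le_of_isVertexCover hV₂)
    obtain ⟨hx, hy, hxy, hcover⟩ := Sum.elim_bijective_iff.mp hbij
    refine ⟨_, x, y, hx, hy, hxy, hcover, fun u v huv => ?_, hmatch,
      fun i j k _ _ _ => hU.adj_of_adj_of_adj hV₁ rfl hbij hmatch⟩
    simpa only [hxV₁, hyV₂] using hcross u v huv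
  · rintro ⟨g, x, y, hx, hy, hxy, hcover, hadj, hmatch, hb⟩ C₁ C₂ h₁ h₂
    have hbij := Sum.elim_bijective_iff.mpr ⟨hx, hy, hxy, hcover⟩
    rw [h₁.card_eq hbij hadj hmatch hb, h₂.card_eq hbij hadj hmatch hb]
end

section
/- Let G be a finite simple graph that satisfies condition (*) for r ≥ 2, with parts V_i = {x_{1i}, …, x_{ni}} for 1 ≤ i ≤ r. Then G is unmixed if and only if the following holds: for every 1 ≤ q ≤ n, if there are vertices x_{k_1 s_1}, …, x_{k_r s_r} with x_{k_1 s_1} adjacent to x_{q1}, x_{k_2 s_2} adjacent to x_{q2}, …, x_{k_r s_r} adjacent to x_{qr}, then the set {x_{k_1 s_1}, …, x_{k_r s_r}} is not independent in G. -/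
/-! Minimal vertex covers are the complements of maximal independent sets, so `G` is unmixed iff
all maximal independent sets have the same size. As every row is a clique, an independent set meets
each row at most once, while a column is a maximal independent set meeting every row. Hence `G` is
unmixed iff every maximal independent set meets every row. Finally, a maximal independent set
avoiding row `q` exists iff some independent set dominates row `q`, i.e. iff there are pairwise
nonadjacent `y_i` with `y_i` adjacent to `x_{qi}`. -/

open Finset

namespace Graph

variable {V : Type*} [Fintype V] [DecidableEq V] (G : SimpleGraph V)

theorem isVertexCover_iff_isIndepSet_compl (C : Finset V) :
    IsVertexCover G C ↔ G.IsIndepSet ↑Cᶜ := by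
  rw [coe_compl, SimpleGraph.isIndepSet_compl_iff_isVertexCover]
  rfl

theorem isMinimalVertexCover_iff_maximal_compl (C : Finset V) :
    IsMinimalVertexCover G C ↔ Maximal (fun M : Finset V ↦ G.IsIndepSet M) Cᶜ := by
  simp only [IsMinimalVertexCover, isVertexCover_iff_isIndepSet_compl, maximal_iff_forall_gt,
    compl_surjective.forall (p := fun M : Finset V ↦ Cᶜ < M → ¬ G.IsIndepSet M),
    compl_lt_compl_iff_lt]

theorem isUnmixed_iff_forall_maximal_card_eq {M₀ : Finset V}
    (hM₀ : Maximal (fun M : Finset V ↦ G.IsIndepSet M) M₀) :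
    IsUnmixed G ↔ ∀ M, Maximal (fun M : Finset V ↦ G.IsIndepSet M) M → #M = #M₀ := by
  simp only [IsUnmixed, isMinimalVertexCover_iff_maximal_compl]
  constructor
  · intro h M hM
    have := h Mᶜ M₀ᶜ (by simpa using hM) (by simpa using hM₀)
    have := card_compl_add_card M
    have := card_compl_add_card M₀
    omega
  · intro h C₁ C₂ h₁ h₂
    have := h _ h₁
    have := h _ h₂
    have := card_compl_add_card C₁
    have := card_compl_add_card C₂
    omega

end Graph

namespace SimpleGraph

variable {V : Type*} {G : SimpleGraph V}

theorem isIndepSet_range_iff {ι : Type*} {y : ι → V} :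
    G.IsIndepSet (Set.range y) ↔ ∀ i j, ¬ G.Adj (y i) (y j) := by
  refine ⟨fun h i j hij ↦ h ⟨i, rfl⟩ ⟨j, rfl⟩ hij.ne hij, ?_⟩
  rintro h _ ⟨i, rfl⟩ _ ⟨j, rfl⟩ -
  exact h i j

theorem exists_adj_of_maximal_isIndepSet {N : Finset V}
    (hN : Maximal (fun M : Finset V ↦ G.IsIndepSet M) N) {v : V} (hv : v ∉ N) :
    ∃ u ∈ N, G.Adj u v := by
  classical
  by_contra! h
  have hins : G.IsIndepSet ↑(insert v N) := by
    rw [coe_insert]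
    exact hN.prop.insert fun u hu _ ↦ ⟨fun hvu ↦ h u hu hvu.symm, h u hu⟩
  exact hv (hN.2 hins (subset_insert v N) (mem_insert_self v N))

theorem exists_maximal_isIndepSet_disjoint_iff [Finite V] (S : Set V) :
    (∃ N : Finset V, Maximal (fun M : Finset V ↦ G.IsIndepSet M) N ∧ Disjoint (N : Set V) S) ↔
      ∃ D : Set V, G.IsIndepSet D ∧ ∀ v ∈ S, ∃ u ∈ D, G.Adj u v := by
  constructor
  · rintro ⟨N, hN, hNS⟩
    exact ⟨N, hN.prop, fun v hv ↦
      exists_adj_of_maximal_isIndepSet hN fun hvN ↦ Set.disjoint_left.1 hNS hvN hv⟩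
  · rintro ⟨D, hD, hDS⟩
    obtain ⟨N, hDN, hN⟩ :=
      Finite.exists_le_maximal (p := fun M : Finset V ↦ G.IsIndepSet M) (a := D.toFinite.toFinset)
        (by simpa using hD)
    refine ⟨N, hN, Set.disjoint_left.2 fun v hvN hvS ↦ ?_⟩
    obtain ⟨u, huD, huv⟩ := hDS v hvS
    exact hN.prop (hDN (by simpa using huD)) hvN huv.ne huv

section Rows

variable {α β : Type*} {G : SimpleGraph (α × β)}

theorem exists_isIndepSet_dominating_row_iff (q : α) :
    (∃ D : Set (α × β), G.IsIndepSet D ∧ ∀ v ∈ Prod.fst ⁻¹' {q}, ∃ u ∈ D, G.Adj u v) ↔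
      ∃ y : β → α × β, (∀ i, G.Adj (y i) (q, i)) ∧ G.IsIndepSet (Set.range y) := by
  constructor
  · rintro ⟨D, hD, hdom⟩
    choose y hyD hy using fun i ↦ hdom (q, i) rfl
    exact ⟨y, hy, hD.mono (Set.range_subset_iff.2 hyD)⟩
  · rintro ⟨y, hy, hind⟩
    refine ⟨_, hind, ?_⟩
    rintro ⟨j, i⟩ (rfl : j = q)
    exact ⟨y i, ⟨i, rfl⟩, hy i⟩

theorem injOn_fst_of_isIndepSet
    (hclique : ∀ j : α, ∀ i i' : β, i ≠ i' → G.Adj (j, i) (j, i'))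
    {s : Set (α × β)} (hs : G.IsIndepSet s) :
    s.InjOn Prod.fst := by
  rintro ⟨j, i⟩ ha ⟨j', i'⟩ hb (rfl : j = j')
  by_contra hne
  exact hs ha hb hne (hclique j i i' fun h ↦ hne (by rw [h]))

theorem IsIndepSet.card_eq_iff_forall_exists_fst_eq [Fintype α] [DecidableEq α]
    (hclique : ∀ j : α, ∀ i i' : β, i ≠ i' → G.Adj (j, i) (j, i'))
    {N : Finset (α × β)} (hN : G.IsIndepSet N) :
    #N = Fintype.card α ↔ ∀ q, ∃ a ∈ N, a.1 = q := by
  rw [← card_image_of_injOn (injOn_fst_of_isIndepSet hclique hN), card_eq_iff_eq_univ,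
    eq_univ_iff_forall]
  simp only [mem_image]

theorem maximal_isIndepSet_column [Fintype α]
    (hclique : ∀ j : α, ∀ i i' : β, i ≠ i' → G.Adj (j, i) (j, i'))
    (hpartite : ∀ p q : α × β, G.Adj p q → p.2 ≠ q.2)
    (i₀ : β) : Maximal (fun M : Finset (α × β) ↦ G.IsIndepSet M) (univ ×ˢ {i₀}) := by
  refine ⟨fun a ha b hb _ hab ↦ hpartite a b hab ?_, fun M hM hcol ⟨j, i⟩ ha ↦ ?_⟩
  · rw [mem_coe, mem_product, mem_singleton] at ha hb
    rw [ha.2, hb.2]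
  · rw [mem_product, mem_singleton]
    refine ⟨mem_univ j, ?_⟩
    by_contra hi
    have hj : (j, i₀) ∈ M := hcol (mem_product.2 ⟨mem_univ j, mem_singleton_self i₀⟩)
    exact hM ha hj (fun h ↦ hi (congrArg Prod.snd h)) (hclique j i i₀ hi)

theorem forall_maximal_isIndepSet_card_eq_iff [Fintype α] [DecidableEq α] [Finite β]
    (hclique : ∀ j : α, ∀ i i' : β, i ≠ i' → G.Adj (j, i) (j, i')) :
    (∀ N, Maximal (fun M : Finset (α × β) ↦ G.IsIndepSet M) N → #N = Fintype.card α) ↔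
      ∀ q (y : β → α × β), (∀ i, G.Adj (y i) (q, i)) → ∃ i j, G.Adj (y i) (y j) := by
  calc (∀ N, Maximal (fun M : Finset (α × β) ↦ G.IsIndepSet M) N → #N = Fintype.card α)
      ↔ ∀ q, ¬ ∃ N : Finset (α × β), Maximal (fun M : Finset (α × β) ↦ G.IsIndepSet M) N ∧
          Disjoint (N : Set (α × β)) (Prod.fst ⁻¹' {q}) := by
        simp only [not_exists, not_and, Set.not_disjoint_iff]
        rw [forall_comm]
        refine forall_congr' fun N ↦ ?_
        rw [← imp_forall_iff]
        exact imp_congr_right fun hN ↦ hN.prop.card_eq_iff_forall_exists_fst_eq hclique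
    _ ↔ ∀ q, ¬ ∃ y : β → α × β, (∀ i, G.Adj (y i) (q, i)) ∧ G.IsIndepSet (Set.range y) := by
        simp_rw [exists_maximal_isIndepSet_disjoint_iff, exists_isIndepSet_dominating_row_iff]
    _ ↔ _ := by
        simp_rw [isIndepSet_range_iff]
        push Not
        rfl

end Rows

end SimpleGraph

open SimpleGraph in
/-- a finite simple graph satisfying condition (*) for `r ≥ 2`
(vertices `x_{ji} = (j, i)`, `r` parts, no edge within a part, each row a clique)
is unmixed iff for every `q`, whenever there are vertices `y_1, …, y_r` with `y_i`
adjacent to `x_{q i}` for each `i`, the set `{y_1, …, y_r}` is not independent. -/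
theorem rPartite_graph_unmixed_iff {n r : ℕ} (hr : 2 ≤ r)
    (G : SimpleGraph (Fin n × Fin r))
    -- condition (*): no edge joins two vertices in the same part
    (hpartite : ∀ p q : Fin n × Fin r, G.Adj p q → p.2 ≠ q.2)
    -- condition (*): each row `{(j, 1), …, (j, r)}` is a clique
    (hclique : ∀ j : Fin n, ∀ i i' : Fin r, i ≠ i' → G.Adj (j, i) (j, i')) :
    Graph.IsUnmixed G ↔
      ∀ q : Fin n, ∀ y : Fin r → Fin n × Fin r,
        (∀ i : Fin r, G.Adj (y i) (q, i)) →
        ∃ i j : Fin r, G.Adj (y i) (y j) := by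
  classical
  have hcol := maximal_isIndepSet_column hclique hpartite (⟨0, by omega⟩ : Fin r)
  rw [Graph.isUnmixed_iff_forall_maximal_card_eq G hcol, card_product, card_univ, card_singleton,
    mul_one]
  exact forall_maximal_isIndepSet_card_eq_iff hclique
end

section
/- Let H be a d-uniform hypergraph (d ≥ 2) on the vertex set {x_{ji} : 1 ≤ j ≤ n, 1 ≤ i ≤ d} (with these nd vertices distinct) such that {{x_{j1}, x_{j2}, …, x_{jd}} : 1 ≤ j ≤ n} is a perfect matching of H. If H is unmixed and H has a minimal vertex cover of cardinality n, then for every 1 ≤ q ≤ n, whenever 𝔢_1 and 𝔢_2 are submaximal edges of H with 𝔢_1 ∼ x_{q i_1} and 𝔢_2 ∼ x_{q i_2} for distinct indices i_1, i_2 in {1, …, d}, the set 𝔢_1 ∪ 𝔢_2 is not independent. -/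
section Hypergraph

variable {V : Type*} [DecidableEq V] [Fintype V] {H : Finset (Finset V)}

theorem isVertexCover_compl_iff {N : Finset V} : IsVertexCover H Nᶜ ↔ IsIndependent H N := by
  simp [IsVertexCover, IsIndependent, Finset.not_subset, Finset.Nonempty]

theorem Maximal.isMinimalVertexCover_compl {N : Finset V} (hN : Maximal (IsIndependent H) N) :
    IsMinimalVertexCover H Nᶜ := by
  refine ⟨isVertexCover_compl_iff.2 hN.prop, fun C hC hcover => ?_⟩
  rw [← compl_compl C, isVertexCover_compl_iff] at hcover
  rw [← compl_compl C, Finset.compl_ssubset_compl] at hC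
  exact hC.not_ge (hN.le_of_ge hcover hC.le)

end Hypergraph

theorem IsVertexCover.injOn_fst_of_card_le {α β : Type*} [DecidableEq α] [DecidableEq β]
    [Fintype α] [Fintype β] {H : Finset (Finset (α × β))} {C : Finset (α × β)}
    (hrows : ∀ a : α, Finset.univ.image (fun b : β => (a, b)) ∈ H) (hC : IsVertexCover H C)
    (hcard : C.card ≤ Fintype.card α) : Set.InjOn Prod.fst (C : Set (α × β)) := by
  refine Finset.injOn_of_surjOn_of_card_le Prod.fst (t := Finset.univ)
    (fun _ _ => Finset.mem_coe.2 (Finset.mem_univ _)) (fun a _ => ?_) (by simpa using hcard)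
  obtain ⟨x, hx⟩ := hC _ (hrows a)
  obtain ⟨b, -, rfl⟩ := Finset.mem_image.1 (Finset.mem_inter.1 hx).1
  exact ⟨_, (Finset.mem_inter.1 hx).2, rfl⟩

theorem unmixed_necessary_condition_matching_general {n d : ℕ}
    (H : Finset (Finset (Fin n × Fin d)))
    -- the rows `{(j, 1), …, (j, d)}` are hyperedges (they form a perfect matching)
    (hmatching : ∀ j : Fin n, Finset.univ.image (fun i : Fin d => (j, i)) ∈ H)
    (hunmixed : IsUnmixed H)
    (hmincover : ∃ C : Finset (Fin n × Fin d), IsMinimalVertexCover H C ∧ C.card = n) :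
    ∀ q : Fin n, ∀ i₁ i₂ : Fin d, i₁ ≠ i₂ →
      ∀ 𝔢₁ 𝔢₂ : Finset (Fin n × Fin d),
        IsSubmaximalEdge H d 𝔢₁ → IsSubmaximalEdge H d 𝔢₂ →
        insert (q, i₁) 𝔢₁ ∈ H → insert (q, i₂) 𝔢₂ ∈ H →
        ¬ IsIndependent H (𝔢₁ ∪ 𝔢₂) := by
  intro q i₁ i₂ hne 𝔢₁ 𝔢₂ _ _ he₁ he₂ hindep
  obtain ⟨C₀, hC₀, hC₀card⟩ := hmincover
  obtain ⟨N, hN𝔢, hN⟩ := Finite.exists_le_maximal hindep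
  have hcard : Nᶜ.card ≤ Fintype.card (Fin n) := by
    simp [hunmixed _ _ hN.isMinimalVertexCover_compl hC₀, hC₀card]
  have hinj := IsVertexCover.injOn_fst_of_card_le hmatching hN.isMinimalVertexCover_compl.1 hcard
  have mem_compl {i : Fin d} {𝔢 : Finset (Fin n × Fin d)} (h𝔢 : 𝔢 ⊆ N)
      (he : insert (q, i) 𝔢 ∈ H) : (q, i) ∈ Nᶜ :=
    Finset.mem_compl.2 fun hqi => hN.prop _ he (Finset.insert_subset hqi h𝔢)
  exact hne <| congrArg Prod.snd <| hinj
    (mem_compl (Finset.subset_union_left.trans hN𝔢) he₁)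
    (mem_compl (Finset.subset_union_right.trans hN𝔢) he₂) rfl

/-- let `H` be a `d`-uniform hypergraph (`d ≥ 2`) on the vertex set
`{x_{ji} = (j, i)}` such that the rows `{x_{j1}, …, x_{jd}}` form a perfect matching.
If `H` is unmixed and has a minimal vertex cover of cardinality `n`, then for every
`q`, whenever `𝔢₁ ∼ x_{q i₁}` and `𝔢₂ ∼ x_{q i₂}` for submaximal edges `𝔢₁, 𝔢₂`
and distinct `i₁, i₂`, the set `𝔢₁ ∪ 𝔢₂` is not independent. -/
theorem unmixed_necessary_condition_matching {n d : ℕ} (hd : 2 ≤ d)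
    (H : Finset (Finset (Fin n × Fin d)))
    -- every vertex lies in some hyperedge (the union of the hyperedges is the vertex set)
    (hunion : ∀ v : Fin n × Fin d, ∃ e ∈ H, v ∈ e)
    -- `H` is `d`-uniform
    (huniform : ∀ e ∈ H, e.card = d)
    -- the rows `{(j, 1), …, (j, d)}` are hyperedges (they form a perfect matching)
    (hmatching : ∀ j : Fin n, Finset.univ.image (fun i : Fin d => (j, i)) ∈ H)
    (hunmixed : IsUnmixed H)
    (hmincover : ∃ C : Finset (Fin n × Fin d), IsMinimalVertexCover H C ∧ C.card = n) :
    ∀ q : Fin n, ∀ i₁ i₂ : Fin d, i₁ ≠ i₂ →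
      ∀ 𝔢₁ 𝔢₂ : Finset (Fin n × Fin d),
        IsSubmaximalEdge H d 𝔢₁ → IsSubmaximalEdge H d 𝔢₂ →
        insert (q, i₁) 𝔢₁ ∈ H → insert (q, i₂) 𝔢₂ ∈ H →
        ¬ IsIndependent H (𝔢₁ ∪ 𝔢₂) :=
  unmixed_necessary_condition_matching_general H hmatching hunmixed hmincover
end

section
/- Let K be a field and let H be a d-uniform r-partite hypergraph with 2 ≤ d ≤ r that satisfies condition (**) for r, with parts V_i = {x_{1i}, …, x_{ni}} for 1 ≤ i ≤ r. Then H is unmixed if and only if for every 1 ≤ q ≤ n and every choice of indices 1 ≤ i_1 < i_2 < … < i_{r−d+2} ≤ r, the image of the polynomial x_{q i_1} + x_{q i_2} + … + x_{q i_{r−d+2}} in the edge ring K[H] = K[x_{ji} : 1 ≤ j ≤ n, 1 ≤ i ≤ r] / I(H) is not a zero divisor. -/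
/-- The edge ideal of a hypergraph `H` over a field (or commutative ring) `K`:
the ideal of the polynomial ring generated by the monomials `∏_{v ∈ e} x_v`
for hyperedges `e` of `H`. -/
noncomputable def edgeIdeal (K : Type*) [CommRing K] {V : Type*} (H : Finset (Finset V)) :
    Ideal (MvPolynomial V K) :=
  Ideal.span ((fun e : Finset V => ∏ v ∈ e, MvPolynomial.X v) '' (H : Set (Finset V)))

/-!
The edge ideal `I(H)` is the intersection of the primes `P_C = (x_v : v ∈ C)` over the minimal
vertex covers `C`, so a sum of variables `∑_{v ∈ S} x_v` is a zero divisor modulo `I(H)` exactly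
when `S` lies in some minimal vertex cover `C`; then `∏_{w ∉ C} x_w` is an annihilator.

Under condition (**) every vertex cover meets each row in at least `r - d + 1` vertices, and the
first `r - d + 1` columns form a minimal vertex cover meeting every row in exactly that many.
Hence `H` is unmixed iff no minimal vertex cover contains `r - d + 2` vertices of one row, i.e.
iff no sum of `r - d + 2` variables of one row is a zero divisor.
-/

open MvPolynomial

section SpanX

variable {σ R : Type*} [CommRing R]

theorem isPrime_span_X_image [IsDomain R] (s : Set σ) :
    (Ideal.span (X '' s : Set (MvPolynomial σ R))).IsPrime := by
  classical
  let φ : MvPolynomial σ R →ₐ[R] MvPolynomial σ R := aeval fun v => if v ∈ s then 0 else X v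
  set P := Ideal.span (X '' s : Set (MvPolynomial σ R))
  -- `φ` kills the variables of `s` and fixes the others, so it is the identity modulo `P`
  have hφ : (Ideal.Quotient.mkₐ R P).comp φ = Ideal.Quotient.mkₐ R P := by
    refine algHom_ext fun v => ?_
    by_cases hv : v ∈ s
    · simpa [φ, hv, eq_comm] using Ideal.Quotient.eq_zero_iff_mem.mpr
        (Ideal.subset_span (Set.mem_image_of_mem X hv) : (X v : MvPolynomial σ R) ∈ P)
    · simp [φ, hv]
  have hker : P = RingHom.ker φ := by
    refine le_antisymm (Ideal.span_le.mpr ?_) fun f hf => ?_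
    · rintro _ ⟨v, hv, rfl⟩
      simp [φ, hv]
    · rw [RingHom.mem_ker] at hf
      rw [← Ideal.Quotient.eq_zero_iff_mem, ← Ideal.Quotient.mkₐ_eq_mk R]
      simpa [hf] using (AlgHom.congr_fun hφ f).symm
  rw [hker]
  exact RingHom.ker_isPrime φ

theorem sum_X_mem_span_X_image_iff [Nontrivial R] (S : Finset σ) (s : Set σ) :
    ∑ v ∈ S, (X v : MvPolynomial σ R) ∈ Ideal.span (X '' s) ↔ ↑S ⊆ s := by
  classical
  refine ⟨fun h v hv => ?_, fun h => Ideal.sum_mem _ fun v hv => Ideal.subset_span ⟨v, h hv, rfl⟩⟩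
  have hcoeff : coeff (Finsupp.single v 1) (∑ w ∈ S, (X w : MvPolynomial σ R)) = 1 := by
    simp [coeff_sum, coeff_X, Finsupp.single_left_inj, Finset.mem_coe.mp hv]
  obtain ⟨w, hw, hvw⟩ := mem_ideal_span_X_image.mp h (Finsupp.single v 1) (by simp [hcoeff])
  rwa [(Finsupp.single_apply_ne_zero.mp hvw).1] at hw

end SpanX

theorem isMinimalVertexCover_iff_minimal {V : Type*} [DecidableEq V] {H : Finset (Finset V)}
    {C : Finset V} : IsMinimalVertexCover H C ↔ Minimal (IsVertexCover H) C :=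
  minimal_iff_forall_lt.symm

section EdgeIdeal

variable {V K : Type*} [DecidableEq V] [CommRing K] {H : Finset (Finset V)} {C : Finset V}

theorem mem_edgeIdeal_iff {f : MvPolynomial V K} :
    f ∈ edgeIdeal K H ↔ ∀ m ∈ f.support, ∃ e ∈ H, ∀ v ∈ e, m v ≠ 0 := by
  have hgen : (fun e : Finset V => ∏ v ∈ e, (X v : MvPolynomial V K)) =
      (fun m => monomial m 1) ∘ fun e => Finsupp.indicator e fun _ _ => 1 := by
    ext1 e
    simpa using prod_X_pow (R := K) 1 e
  rw [edgeIdeal, hgen, Set.image_comp, mem_ideal_span_monomial_image]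
  refine forall₂_congr fun m _ => ?_
  simp only [Set.mem_image, Finset.mem_coe, exists_exists_and_eq_and, Finsupp.le_def,
    Finsupp.indicator_apply]
  refine exists_congr fun e => and_congr_right fun _ => forall_congr' fun v => ?_
  by_cases hv : v ∈ e <;> simp [hv, Nat.one_le_iff_ne_zero]

theorem IsVertexCover.edgeIdeal_le (hC : IsVertexCover H C) :
    edgeIdeal K H ≤ Ideal.span (X '' ↑C) := by
  refine Ideal.span_le.mpr ?_
  rintro _ ⟨e, he, rfl⟩
  obtain ⟨v, hv⟩ := hC e he
  obtain ⟨hve, hvC⟩ := Finset.mem_inter.mp hv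
  exact Ideal.mem_of_dvd _ (Finset.dvd_prod_of_mem _ hve) (Ideal.subset_span ⟨v, hvC, rfl⟩)

variable [Fintype V]

theorem edgeIdeal_eq_iInf_span_X :
    edgeIdeal K H = ⨅ (C) (_ : IsMinimalVertexCover H C), Ideal.span (X '' ↑C) := by
  refine le_antisymm (le_iInf₂ fun C hC => hC.1.edgeIdeal_le) fun f hf => ?_
  simp only [Submodule.mem_iInf] at hf
  refine mem_edgeIdeal_iff.mpr fun m hm => ?_
  by_contra! hno
  -- the variables absent from `m` form a vertex cover; a minimal one inside it contradicts `hf`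
  have hcover : IsVertexCover H (Finset.univ \ m.support) := fun e he => by
    obtain ⟨v, hve, hmv⟩ := hno e he
    exact ⟨v, Finset.mem_inter.mpr ⟨hve, by simpa using hmv⟩⟩
  obtain ⟨C, hCsub, hC⟩ := exists_minimal_le_of_wellFoundedLT _ _ hcover
  obtain ⟨v, hvC, hmv⟩ :=
    mem_ideal_span_X_image.mp (hf C (isMinimalVertexCover_iff_minimal.mpr hC)) m hm
  simpa [hmv] using hCsub hvC

theorem IsVertexCover.prod_X_compl_notMem_edgeIdeal [IsDomain K] (hC : IsVertexCover H C) :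
    ∏ w ∈ Cᶜ, (X w : MvPolynomial V K) ∉ edgeIdeal K H := by
  have := isPrime_span_X_image (R := K) (C : Set V)
  intro h
  obtain ⟨w, hw, hwC⟩ := Ideal.IsPrime.prod_mem_iff.mp (hC.edgeIdeal_le h)
  have hwC' : w ∈ C := by
    simpa using (sum_X_mem_span_X_image_iff {w} (C : Set V)).mp (by simpa using hwC)
  exact Finset.mem_compl.mp hw hwC'

theorem IsMinimalVertexCover.X_mul_prod_X_compl_mem_edgeIdeal (hC : IsMinimalVertexCover H C)
    {v : V} (hv : v ∈ C) : X v * ∏ w ∈ Cᶜ, (X w : MvPolynomial V K) ∈ edgeIdeal K H := by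
  -- minimality: some hyperedge meets `C` only in `v`
  obtain ⟨e, he, hdisj⟩ : ∃ e ∈ H, ¬ (e ∩ C.erase v).Nonempty := by
    simpa [IsVertexCover] using hC.2 _ (Finset.erase_ssubset hv)
  have hsub : e ⊆ insert v Cᶜ := fun w hw => by
    by_cases hwv : w = v
    · simp [hwv]
    · exact Finset.mem_insert_of_mem (Finset.mem_compl.mpr fun hwC =>
        hdisj ⟨w, Finset.mem_inter.mpr ⟨hw, Finset.mem_erase.mpr ⟨hwv, hwC⟩⟩⟩)
  rw [← Finset.prod_insert (Finset.notMem_compl.mpr hv)]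
  exact Ideal.mem_of_dvd _ (Finset.prod_dvd_prod_of_subset _ _ _ hsub)
    (Ideal.subset_span ⟨e, he, rfl⟩)

end EdgeIdeal

theorem exists_ne_zero_mk_sum_X_mul_eq_zero_iff {V K : Type*} [DecidableEq V] [Fintype V]
    [CommRing K] [IsDomain K] {H : Finset (Finset V)} (S : Finset V) :
    (∃ b : MvPolynomial V K ⧸ edgeIdeal K H,
        b ≠ 0 ∧ Ideal.Quotient.mk (edgeIdeal K H) (∑ v ∈ S, X v) * b = 0) ↔
      ∃ C, IsMinimalVertexCover H C ∧ S ⊆ C := by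
  constructor
  · rintro ⟨b, hb, hSb⟩
    obtain ⟨f, rfl⟩ := Ideal.Quotient.mk_surjective b
    rw [ne_eq, Ideal.Quotient.eq_zero_iff_mem] at hb
    rw [← map_mul, Ideal.Quotient.eq_zero_iff_mem] at hSb
    by_contra! hS
    refine hb ?_
    rw [edgeIdeal_eq_iInf_span_X]
    simp only [Submodule.mem_iInf]
    intro C hC
    refine ((isPrime_span_X_image (C : Set V)).mem_or_mem (hC.1.edgeIdeal_le hSb)).resolve_left
      fun h => hS C hC ?_
    exact_mod_cast (sum_X_mem_span_X_image_iff S C).mp h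
  · rintro ⟨C, hC, hSC⟩
    refine ⟨Ideal.Quotient.mk _ (∏ w ∈ Cᶜ, X w), ?_, ?_⟩
    · rw [ne_eq, Ideal.Quotient.eq_zero_iff_mem]
      exact hC.1.prod_X_compl_notMem_edgeIdeal
    · rw [← map_mul, Ideal.Quotient.eq_zero_iff_mem, Finset.sum_mul]
      exact Ideal.sum_mem _ fun v hv => hC.X_mul_prod_X_compl_mem_edgeIdeal (hSC hv)

theorem exists_strictMono_forall_mem_iff_le_card {α : Type*} [LinearOrder α] {s : Finset α}
    {k : ℕ} : (∃ f : Fin k → α, StrictMono f ∧ ∀ t, f t ∈ s) ↔ k ≤ s.card := by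
  constructor
  · rintro ⟨f, hf, hfs⟩
    simpa using Finset.card_le_card_of_injOn (s := Finset.univ) f (fun t _ => hfs t)
      hf.injective.injOn
  · intro hk
    exact ⟨s.orderEmbOfFin rfl ∘ Fin.castLE hk,
      (s.orderEmbOfFin rfl).strictMono.comp (Fin.strictMono_castLE hk),
      fun t => s.orderEmbOfFin_mem rfl _⟩

section Rows

variable {α β : Type*} [DecidableEq α] [DecidableEq β]

def rowCols [Fintype β] (C : Finset (α × β)) (j : α) : Finset β := {i | (j, i) ∈ C}

theorem card_eq_sum_card_rowCols [Fintype α] [Fintype β] (C : Finset (α × β)) :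
    C.card = ∑ j, (rowCols C j).card := by
  rw [← Finset.filter_univ_mem C]
  simp only [rowCols, Finset.card_filter, Fintype.sum_prod_type, Finset.mem_filter,
    Finset.mem_univ, true_and]

end Rows

section Covers

variable {α : Type*} [DecidableEq α] {r d : ℕ} {H : Finset (Finset (α × Fin r))}

def firstColumns (α : Type*) [Fintype α] (r k : ℕ) : Finset (α × Fin r) := {p | (p.2 : ℕ) < k}

theorem card_rowCols_firstColumns [Fintype α] {k : ℕ} (hk : k ≤ r) (j : α) :
    (rowCols (firstColumns α r k) j).card = k := by
  have : rowCols (firstColumns α r k) j = ({i : Fin r | (i : ℕ) < k} : Finset (Fin r)) := by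
    ext; simp [rowCols, firstColumns]
  rw [this, Fin.card_filter_val_lt, min_eq_right hk]

theorem IsVertexCover.sub_add_one_le_card_rowCols (hdr : d ≤ r)
    (hclique : ∀ j : α, ∀ s ⊆ Finset.univ.image (fun i : Fin r => (j, i)), s.card = d → s ∈ H)
    {C : Finset (α × Fin r)} (hC : IsVertexCover H C) (j : α) :
    r - d + 1 ≤ (rowCols C j).card := by
  by_contra! hlt
  have : d ≤ (rowCols C j)ᶜ.card := by
    rw [Finset.card_compl, Fintype.card_fin]
    omega
  obtain ⟨t, ht, htd⟩ := Finset.exists_subset_card_eq this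
  have he : t.image (fun i => (j, i)) ∈ H := hclique j _
    (Finset.image_subset_image (Finset.subset_univ t))
    (by rw [Finset.card_image_of_injective _ (Prod.mk_right_injective j), htd])
  obtain ⟨v, hv⟩ := hC _ he
  simp only [Finset.mem_inter, Finset.mem_image] at hv
  obtain ⟨⟨i, hit, rfl⟩, hiC⟩ := hv
  simpa [rowCols, hiC] using ht hit

theorem isVertexCover_firstColumns [Fintype α] (hd : 1 ≤ d) (hdr : d ≤ r)
    (huniform : ∀ e ∈ H, e.card = d)
    (hpartite : ∀ e ∈ H, ∀ p ∈ e, ∀ p' ∈ e, p.2 = p'.2 → p = p') :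
    IsVertexCover H (firstColumns α r (r - d + 1)) := by
  intro e he
  by_contra! hdisj
  -- the `d` columns of `e` would all lie among the last `d - 1` columns
  set S : Finset (Fin r) := {i | (i : ℕ) < r - d + 1}
  have hcols : Disjoint (e.image Prod.snd) S := by
    refine Finset.disjoint_left.mpr fun i hie hi => ?_
    obtain ⟨p, hpe, rfl⟩ := Finset.mem_image.mp hie
    exact Finset.eq_empty_iff_forall_notMem.mp hdisj p
      (Finset.mem_inter.mpr ⟨hpe, by simpa [S, firstColumns] using hi⟩)
  have hcard := Finset.card_union_of_disjoint hcols ▸ Finset.card_le_univ (e.image Prod.snd ∪ S)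
  rw [Finset.card_image_of_injOn (fun p hp p' hp' => hpartite e he p hp p' hp'), huniform e he,
    Fin.card_filter_val_lt, Fintype.card_fin] at hcard
  omega

theorem isMinimalVertexCover_firstColumns [Fintype α] (hd : 1 ≤ d) (hdr : d ≤ r)
    (huniform : ∀ e ∈ H, e.card = d)
    (hpartite : ∀ e ∈ H, ∀ p ∈ e, ∀ p' ∈ e, p.2 = p'.2 → p = p')
    (hclique : ∀ j : α, ∀ s ⊆ Finset.univ.image (fun i : Fin r => (j, i)), s.card = d → s ∈ H) :
    IsMinimalVertexCover H (firstColumns α r (r - d + 1)) := by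
  refine ⟨isVertexCover_firstColumns hd hdr huniform hpartite, fun C hC hcover => ?_⟩
  obtain ⟨⟨j, i⟩, hiC₀, hiC⟩ := Finset.exists_of_ssubset hC
  set S : Finset (Fin r) := {i | (i : ℕ) < r - d + 1}
  have hiS : i ∈ S := by simpa [S, firstColumns] using hiC₀
  -- `(j, i)` and the last `d - 1` vertices of row `j` form a hyperedge missed by `C`
  have hcard : (insert i Sᶜ).card = d := by
    rw [Finset.card_insert_of_notMem (by simpa using hiS), Finset.card_compl, Fintype.card_fin,
      Fin.card_filter_val_lt]
    omega
  have he := hclique j _ (Finset.image_subset_image (Finset.subset_univ (insert i Sᶜ)))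
    (by rw [Finset.card_image_of_injective _ (Prod.mk_right_injective j), hcard])
  obtain ⟨v, hv⟩ := hcover _ he
  simp only [Finset.mem_inter, Finset.mem_image] at hv
  obtain ⟨⟨i', hi', rfl⟩, hi'C⟩ := hv
  rcases Finset.mem_insert.mp hi' with rfl | hi'S
  · exact hiC hi'C
  · have := hC.subset hi'C
    simp only [S, firstColumns, Finset.mem_compl, Finset.mem_filter, Finset.mem_univ,
      true_and] at this hi'S
    exact hi'S this

theorem isUnmixed_iff_forall_card_rowCols_le [Fintype α] (hd : 1 ≤ d) (hdr : d ≤ r)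
    (huniform : ∀ e ∈ H, e.card = d)
    (hpartite : ∀ e ∈ H, ∀ p ∈ e, ∀ p' ∈ e, p.2 = p'.2 → p = p')
    (hclique : ∀ j : α, ∀ s ⊆ Finset.univ.image (fun i : Fin r => (j, i)), s.card = d → s ∈ H) :
    IsUnmixed H ↔ ∀ C, IsMinimalVertexCover H C → ∀ j, (rowCols C j).card ≤ r - d + 1 := by
  set C₀ := firstColumns α r (r - d + 1)
  have hC₀ := isMinimalVertexCover_firstColumns hd hdr huniform hpartite hclique
  -- each row of a cover has at least `r - d + 1` vertices, and each row of `C₀` exactly that many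
  have hcard : ∀ C, IsVertexCover H C →
      (C.card = C₀.card ↔ ∀ j, (rowCols C j).card = r - d + 1) := fun C hC => by
    simp only [card_eq_sum_card_rowCols C, card_eq_sum_card_rowCols C₀, C₀,
      card_rowCols_firstColumns (show r - d + 1 ≤ r by omega)]
    rw [eq_comm,
      Finset.sum_eq_sum_iff_of_le fun j _ => hC.sub_add_one_le_card_rowCols hdr hclique j]
    simp [eq_comm]
  constructor
  · intro hu C hC j
    exact ((hcard C hC.1).mp (hu C C₀ hC hC₀) j).le
  · intro h C₁ C₂ hC₁ hC₂
    have hrows : ∀ C, IsMinimalVertexCover H C → C.card = C₀.card := fun C hC =>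
      (hcard C hC.1).mpr fun j =>
        (h C hC j).antisymm (hC.1.sub_add_one_le_card_rowCols hdr hclique j)
    rw [hrows C₁ hC₁, hrows C₂ hC₂]

end Covers

theorem unmixed_iff_not_zeroDivisor_general {n r d : ℕ} (hd : 2 ≤ d) (hdr : d ≤ r)
    (K : Type*) [Field K]
    (H : Finset (Finset (Fin n × Fin r)))
    -- `H` is `d`-uniform
    (huniform : ∀ e ∈ H, e.card = d)
    -- `H` is `r`-partite with parts `V_i = {(j, i) : j}`: no hyperedge contains two
    -- distinct vertices from the same part
    (hpartite : ∀ e ∈ H, ∀ p ∈ e, ∀ p' ∈ e, p.2 = p'.2 → p = p')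
    -- condition (**): each row `{(j, 1), …, (j, r)}` is a clique
    (hclique : ∀ j : Fin n, ∀ s ⊆ Finset.univ.image (fun i : Fin r => (j, i)),
      s.card = d → s ∈ H) :
    IsUnmixed H ↔
      ∀ q : Fin n, ∀ ι : Fin (r - d + 2) → Fin r, StrictMono ι →
        ¬ ∃ b : MvPolynomial (Fin n × Fin r) K ⧸ edgeIdeal K H,
            b ≠ 0 ∧
            Ideal.Quotient.mk (edgeIdeal K H)
              (∑ t : Fin (r - d + 2), MvPolynomial.X (q, ι t)) * b = 0 := by
  have hzd : ∀ q ι, StrictMono ι → ((∃ b : MvPolynomial (Fin n × Fin r) K ⧸ edgeIdeal K H,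
      b ≠ 0 ∧ Ideal.Quotient.mk (edgeIdeal K H)
        (∑ t : Fin (r - d + 2), MvPolynomial.X (q, ι t)) * b = 0) ↔
      ∃ C, IsMinimalVertexCover H C ∧ ∀ t, ι t ∈ rowCols C q) := fun q ι hι => by
    rw [← Finset.sum_image fun _ _ _ _ h => hι.injective (congrArg Prod.snd h),
      exists_ne_zero_mk_sum_X_mul_eq_zero_iff]
    simp [Finset.image_subset_iff, rowCols]
  rw [isUnmixed_iff_forall_card_rowCols_le (by omega) hdr huniform hpartite hclique]
  constructor
  · rintro h q ι hι hzdι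
    obtain ⟨C, hC, hιC⟩ := (hzd q ι hι).mp hzdι
    have := exists_strictMono_forall_mem_iff_le_card.mp ⟨ι, hι, hιC⟩
    have := h C hC q
    omega
  · intro h C hC q
    by_contra! hlt
    obtain ⟨ι, hι, hιC⟩ := exists_strictMono_forall_mem_iff_le_card.mpr (Nat.succ_le_of_lt hlt)
    exact h q ι hι ((hzd q ι hι).mpr ⟨C, hC, hιC⟩)

/-- a `d`-uniform `r`-partite hypergraph (`2 ≤ d ≤ r`) satisfying
condition (**) for `r` (vertices `x_{ji} = (j, i)`, parts `V_i`, each row a clique)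
is unmixed iff for every `q` and all indices `i_1 < i_2 < … < i_{r-d+2}`, the image
of `x_{q i_1} + … + x_{q i_{r-d+2}}` in the edge ring `K[H]` is not a zero divisor. -/
theorem unmixed_iff_not_zeroDivisor {n r d : ℕ} (hd : 2 ≤ d) (hdr : d ≤ r)
    (K : Type*) [Field K]
    (H : Finset (Finset (Fin n × Fin r)))
    -- every vertex lies in some hyperedge (the union of the hyperedges is the vertex set)
    (hunion : ∀ v : Fin n × Fin r, ∃ e ∈ H, v ∈ e)
    -- `H` is `d`-uniform
    (huniform : ∀ e ∈ H, e.card = d)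
    -- `H` is `r`-partite with parts `V_i = {(j, i) : j}`: no hyperedge contains two
    -- distinct vertices from the same part
    (hpartite : ∀ e ∈ H, ∀ p ∈ e, ∀ p' ∈ e, p.2 = p'.2 → p = p')
    -- condition (**): each row `{(j, 1), …, (j, r)}` is a clique
    (hclique : ∀ j : Fin n, ∀ s ⊆ Finset.univ.image (fun i : Fin r => (j, i)),
      s.card = d → s ∈ H) :
    IsUnmixed H ↔
      ∀ q : Fin n, ∀ ι : Fin (r - d + 2) → Fin r, StrictMono ι →
        ¬ ∃ b : MvPolynomial (Fin n × Fin r) K ⧸ edgeIdeal K H,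
            b ≠ 0 ∧
            Ideal.Quotient.mk (edgeIdeal K H)
              (∑ t : Fin (r - d + 2), MvPolynomial.X (q, ι t)) * b = 0 :=
  unmixed_iff_not_zeroDivisor_general hd hdr K H huniform hpartite hclique
end
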